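/- Suppose G is acyclic. If R_u, R_v, R_w are routes of G and μ_1, μ_2 ∈ ℝ satisfy x_{R_u} = μ_1·x_{R_v} + μ_2·x_{R_w}, then x_{R_u} = x_{R_v} or x_{R_u} = x_{R_w}. In particular, no three pairwise distinct signed characteristic vectors of routes of G are collinear. -/

import Mathlib

namespace FP

/-- The three possible types of an edge `(i,j)` with `i < j`. -/
inductive EdgeType : Type
  | forward
  | backward
  | bidirectional
  deriving DecidableEq

/-- An edge is a pair of endpoints `(i,j)` (with the convention `i < j`
for well-formed graphs) together with its type. -/
abbrev GEdge : Type := ℕ × ℕ × EdgeType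

/-- A directed multigraph given by a list of edges, together with a
distinguished source and sink vertex. -/
structure LGraph : Type where
  edges : List GEdge
  src : ℕ
  snk : ℕ

namespace LGraph

/-- The number of edges. -/
def m (G : LGraph) : ℕ := G.edges.length

/-- The smaller endpoint of the `e`-th edge. -/
def tail (G : LGraph) (e : Fin G.m) : ℕ := (G.edges.get e).1

/-- The larger endpoint of the `e`-th edge. -/
def head (G : LGraph) (e : Fin G.m) : ℕ := (G.edges.get e).2.1

/-- The type of the `e`-th edge. -/
def etype (G : LGraph) (e : Fin G.m) : EdgeType := (G.edges.get e).2.2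

/-- Wellformedness: the graph has vertex set `{1,…,n}` and each edge `(i,j)`
satisfies `i < j`. -/
def WF (G : LGraph) (n : ℕ) : Prop := ∀ e ∈ G.edges, 1 ≤ e.1 ∧ e.1 < e.2.1 ∧ e.2.1 ≤ n

/-- The netflow of `x` at the vertex `v`: total flow on edges `(v,k)`, `v < k`,
minus the total flow on edges `(i,v)`, `i < v`. -/
noncomputable def netflow (G : LGraph) (x : Fin G.m → ℝ) (v : ℕ) : ℝ :=
  ∑ e : Fin G.m, ((if G.tail e = v then x e else 0) - (if G.head e = v then x e else 0))

/-- The set of `u`-flows on `G`, where `u = e_src - e_snk`: the netflow is `1` at the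
source, `-1` at the sink and `0` elsewhere, flows on forward edges are nonnegative and
flows on backward edges are nonpositive (bidirectional edges unrestricted).  This is
the flow polytope `F_G ⊆ ℝ^m`. -/
def flowSet (G : LGraph) : Set (Fin G.m → ℝ) :=
  { x | (∀ v : ℕ, G.netflow x v = (if v = G.src then (1 : ℝ) else 0) - (if v = G.snk then 1 else 0))
      ∧ ∀ e : Fin G.m, (G.etype e = .forward → 0 ≤ x e) ∧ (G.etype e = .backward → x e ≤ 0) }

/-- One step of a directed walk: forward edges can be traversed from the smaller to the
larger endpoint, backward edges from the larger to the smaller, bidirectional edges both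
ways. -/
def DStep (G : LGraph) (a b : ℕ) : Prop :=
  ∃ e : Fin G.m, (G.tail e = a ∧ G.head e = b ∧ G.etype e ≠ .backward) ∨
                 (G.head e = a ∧ G.tail e = b ∧ G.etype e ≠ .forward)

/-- `G` is acyclic if it has no directed cycle. -/
def Acyclic (G : LGraph) : Prop := ∀ v : ℕ, ¬ Relation.TransGen G.DStep v v

/-- One step in the underlying undirected graph. -/
def UStep (G : LGraph) (a b : ℕ) : Prop :=
  ∃ e : Fin G.m, (G.tail e = a ∧ G.head e = b) ∨ (G.head e = a ∧ G.tail e = b)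

/-- `G` is connected (as an undirected graph on the vertex set `{1,…,n}`). -/
def Connected (G : LGraph) (n : ℕ) : Prop :=
  ∀ a b : ℕ, 1 ≤ a → a ≤ n → 1 ≤ b → b ≤ n → Relation.ReflTransGen G.UStep a b

/-- The starting vertex of a traversal step `(e, d)`: `d = true` means the edge `e` is
traversed from its smaller to its larger endpoint. -/
def sv (G : LGraph) (s : Fin G.m × Bool) : ℕ := if s.2 then G.tail s.1 else G.head s.1

/-- The ending vertex of a traversal step. -/
def ev (G : LGraph) (s : Fin G.m × Bool) : ℕ := if s.2 then G.head s.1 else G.tail s.1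

/-- A route of `G`: a directed path from the source to the sink (not repeating edges),
traversing each edge in a direction allowed by its type. -/
structure Route (G : LGraph) : Type where
  steps : List (Fin G.m × Bool)
  ne : steps ≠ []
  chain : steps.Chain' (fun s t => G.ev s = G.sv t)
  first : G.sv (steps.head ne) = G.src
  last : G.ev (steps.getLast ne) = G.snk
  dir : ∀ s ∈ steps, (s.2 = true → G.etype s.1 ≠ .backward) ∧ (s.2 = false → G.etype s.1 ≠ .forward)
  nodup : (steps.map Prod.fst).Nodup

/-- The signed characteristic vector of a route: `+1` on edges traversed from smaller to
larger endpoint, `-1` on edges traversed from larger to smaller endpoint, `0` on unused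
edges. -/
noncomputable def Route.vec {G : LGraph} (R : Route G) : Fin G.m → ℝ := fun e =>
  if (e, true) ∈ R.steps then 1 else if (e, false) ∈ R.steps then -1 else 0

end LGraph

/-- A point of `ℝ^α` is a lattice point if all its coordinates are integers. -/
def IsLatticePt {α : Type*} (x : α → ℝ) : Prop := ∀ i, ∃ z : ℤ, x i = (z : ℝ)

/-- Integral equivalence of two subsets `P ⊆ ℝ^α`, `Q ⊆ ℝ^β`: an affine map `φ` restricting
to a bijection from `P` onto `Q` and to a bijection between the lattice points of the
affine hull of `P` and those of the affine hull of `Q`. -/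
def IntEquiv {α β : Type*} (P : Set (α → ℝ)) (Q : Set (β → ℝ)) : Prop :=
  ∃ φ : (α → ℝ) →ᵃ[ℝ] (β → ℝ),
    Set.BijOn φ P Q ∧
    Set.BijOn φ ({x | IsLatticePt x} ∩ (affineSpan ℝ P : Set (α → ℝ)))
                ({x | IsLatticePt x} ∩ (affineSpan ℝ Q : Set (β → ℝ)))

/-! ### Lattice paths and the canonical indexing -/

/-- A lattice path is a list of letters, `true` = E-step `(1,0)`, `false` = N-step `(0,1)`.
`ovl ν` is the path `ν̄ = E ν N`. -/
def ovl (ν : List Bool) : List Bool := true :: ν ++ [false]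

/-- Auxiliary function for the canonical indexing: `prev` is the previous letter,
`k` is the last index used. -/
def canonIdxAux : List Bool → Bool → ℕ → List ℕ
  | [], _, _ => []
  | c :: rest, prev, k =>
    if prev && !c then k :: canonIdxAux rest c k
    else (k + 1) :: canonIdxAux rest c (k + 1)

/-- The canonical indexing of a word in `{E,N}`: reading left to right, each letter
receives the next positive integer, except that the first `N` of a maximal run of `N`s
receives the index of the immediately preceding `E` step. -/
def canonIdx (w : List Bool) : List ℕ := canonIdxAux w false 0

/-- The letter at position `p` (`true` = E). -/
def letterAt (w : List Bool) (p : ℕ) : Bool := w.getD p false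

/-- The canonical index of the letter at position `p`. -/
def idxAt (w : List Bool) (p : ℕ) : ℕ := (canonIdx w).getD p 0

/-- The largest canonical index `n` of the word `w`. -/
def nIdx (w : List Bool) : ℕ := idxAt w (w.length - 1)

/-- The set `I` of indices of E steps. -/
def Iset (w : List Bool) : Finset ℕ :=
  (((List.range w.length).filter (fun p => letterAt w p)).map (idxAt w)).toFinset

/-- The set `J` of indices of N steps. -/
def Jset (w : List Bool) : Finset ℕ :=
  (((List.range w.length).filter (fun p => !letterAt w p)).map (idxAt w)).toFinset

/-- The set `I ∩ J` of indices of valleys. -/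
def Vset (w : List Bool) : Finset ℕ := Iset w ∩ Jset w

/-- The valleys `v_1 < v_2 < ⋯ < v_w` as a sorted list. -/
def valleyList (w : List Bool) : List ℕ := (Vset w).sort (· ≤ ·)

/-- The number `w` of valleys. -/
def numVal (w : List Bool) : ℕ := (valleyList w).length

/-- The `k`-th valley `v_k` (`1 ≤ k ≤ numVal w`). -/
def vv (w : List Bool) (k : ℕ) : ℕ := (valleyList w).getD (k - 1) 0

/-! ### The ν-graph, its bidirectional version and partial augmentations -/

/-- `(i,j)` is an edge of the ν-graph iff `E_i ⋯ N_j` is a consecutive subword of `w`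
whose only valleys are `E_k N_k` with `k = i` or `k = j`. -/
def isNuEdgeB (w : List Bool) (i j : ℕ) : Bool :=
  (List.range w.length).any fun p =>
    (List.range w.length).any fun q =>
      decide (p < q) && letterAt w p && !letterAt w q &&
      decide (idxAt w p = i) && decide (idxAt w q = j) &&
      ((List.range w.length).all fun r =>
        !(decide (p ≤ r) && decide (r + 1 ≤ q) && letterAt w r && !letterAt w (r + 1)) ||
        decide (idxAt w r = i) || decide (idxAt w r = j))

/-- The list of edges `(i,j)`, `i < j`, of the ν-graph `G(ν)` (where `w = ν̄`). -/
def nuEdgePairs (w : List Bool) : List (ℕ × ℕ) :=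
  ((List.range (nIdx w + 1)).flatMap fun i =>
    (List.range (nIdx w + 1)).map fun j => (i, j)).filter
    fun p => decide (p.1 < p.2) && isNuEdgeB w p.1 p.2

/-- The edges of `G(ν)`, all forward. -/
def Gedges (w : List Bool) : List GEdge :=
  (nuEdgePairs w).map fun p => (p.1, p.2, EdgeType.forward)

/-- The edges of the bidirectional ν-graph `G_B(ν)`: an edge is bidirectional exactly
when both of its endpoints lie in `I ∩ J`. -/
def GBedges (w : List Bool) : List GEdge :=
  (nuEdgePairs w).map fun p =>
    (p.1, p.2, if p.1 ∈ Vset w ∧ p.2 ∈ Vset w then EdgeType.bidirectional else EdgeType.forward)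

/-- Out-degree of a vertex in an edge list: the number of edges traversable out of `v`. -/
def outDegL (E : List GEdge) (v : ℕ) : ℕ :=
  (E.filter fun e => (decide (e.1 = v) && decide (e.2.2 ≠ EdgeType.backward)) ||
                     (decide (e.2.1 = v) && decide (e.2.2 ≠ EdgeType.forward))).length

/-- In-degree of a vertex in an edge list: the number of edges traversable into `v`. -/
def inDegL (E : List GEdge) (v : ℕ) : ℕ :=
  (E.filter fun e => (decide (e.2.1 = v) && decide (e.2.2 ≠ EdgeType.backward)) ||
                     (decide (e.1 = v) && decide (e.2.2 ≠ EdgeType.forward))).length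

/-- The full augmentation of an edge list on inner vertices `1,…,n`: add a source `s = 0`
and a sink `t = n+1` together with forward edges `(s,i)` and `(i,t)` for all `i`. -/
def fullAug (n : ℕ) (E : List GEdge) : List GEdge :=
  E ++ ((List.range n).map fun i => (0, i + 1, EdgeType.forward))
    ++ ((List.range n).map fun i => (i + 1, n + 1, EdgeType.forward))

/-- The partial augmentation: the full augmentation with the edges `(s,i)` for which `i`
has out-degree one, and the edges `(j,t)` for which `j` has in-degree one, removed. -/
def partAug (n : ℕ) (E : List GEdge) : List GEdge :=
  E ++ ((List.range n).filterMap fun i =>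
          if outDegL (fullAug n E) (i + 1) = 1 then none else some (0, i + 1, EdgeType.forward))
    ++ ((List.range n).filterMap fun j =>
          if inDegL (fullAug n E) (j + 1) = 1 then none else some (j + 1, n + 1, EdgeType.forward))

/-- The graph `G̃_B(ν)`: the partial augmentation of the bidirectional ν-graph, with
source `s = 0` and sink `t = n+1`. -/
def GBt (w : List Bool) : LGraph := ⟨partAug (nIdx w) (GBedges w), 0, nIdx w + 1⟩

/-- The graph `G̃(ν)`: the partial augmentation of the ν-graph. -/
def Gt (w : List Bool) : LGraph := ⟨partAug (nIdx w) (Gedges w), 0, nIdx w + 1⟩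

/-- The edges of the graph `G(ν,k)`: the bidirectional path of `G_B(ν)` is replaced by
`C_ν(k)`, i.e. all edges are made forward, the forward edge `(v_k, v_{k+1})` is removed
and the backward edge `(v_1, v_w)` is added when `k < w` (for `k = w` nothing changes). -/
def GnuIedges (w : List Bool) (k : ℕ) : List GEdge :=
  ((nuEdgePairs w).filterMap fun p =>
    if k < numVal w ∧ p = (vv w k, vv w (k + 1)) then none
    else some (p.1, p.2, EdgeType.forward))
  ++ (if k < numVal w then [(vv w 1, vv w (numVal w), EdgeType.backward)] else [])

/-- The graph `G̃(ν,k)`: the partial augmentation of `G(ν,k)`. -/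
def Gnut (w : List Bool) (k : ℕ) : LGraph := ⟨partAug (nIdx w) (GnuIedges w k), 0, nIdx w + 1⟩

/-- All candidate edges on the vertex set `{0,1,…,n+1}`. -/
def allCand (n : ℕ) : List GEdge :=
  (List.range (n + 2)).flatMap fun a =>
    (List.range (n + 2)).flatMap fun b =>
      [(a, b, EdgeType.forward), (a, b, EdgeType.backward), (a, b, EdgeType.bidirectional)]

/-- The intersection `∩_{k ∈ S} G̃(ν,k)` of the partial augmentations of the graphs
`G(ν,k)`, `k ∈ S`, as a graph with source `0` and sink `n+1`. -/
def interGraph (w : List Bool) (S : Finset ℕ) : LGraph :=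
  ⟨(allCand (nIdx w)).filter fun e =>
      decide (∀ k ∈ S, e ∈ partAug (nIdx w) (GnuIedges w k)), 0, nIdx w + 1⟩

/-! ### The polytopes `Q_i` -/

/-- The condition on a route of `G̃_B(ν)` defining `Q_k` (`1 ≤ k < w`): the route does not
traverse the bidirectional edge `(v_k, v_{k+1})` forward, and traverses it backward
whenever it traverses any bidirectional edge backward. -/
def QRoute (w : List Bool) (k : ℕ) (R : LGraph.Route (GBt w)) : Prop :=
  (∀ e : Fin (GBt w).m, (GBt w).tail e = vv w k → (GBt w).head e = vv w (k + 1) →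
      (e, true) ∉ R.steps) ∧
  ((∃ s ∈ R.steps, s.2 = false) →
      ∃ e : Fin (GBt w).m, (GBt w).tail e = vv w k ∧ (GBt w).head e = vv w (k + 1) ∧
        (e, false) ∈ R.steps)

/-- The polytope `Q_k` for `1 ≤ k ≤ w`.  For `k < w` it is the convex hull of the signed
characteristic vectors of the routes satisfying `QRoute`, and `Q_w` is the flow polytope
`F_{G̃(ν)}` viewed inside `F_{G̃_B(ν)}` (the nonnegative flows). -/
def Qset (w : List Bool) (k : ℕ) : Set (Fin (GBt w).m → ℝ) :=
  if k = numVal w then { x ∈ (GBt w).flowSet | ∀ e, 0 ≤ x e }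
  else convexHull ℝ { x | ∃ R : LGraph.Route (GBt w), QRoute w k R ∧ x = R.vec }

/-! ### Products of simplices -/

/-- The `i`-th standard basis vector. -/
def stdBasisVec {α : Type*} [DecidableEq α] (i : α) : α → ℝ := fun k => if k = i then 1 else 0

/-- The product of simplices `Δ_a × Δ_b = conv{(e_i, e_j)} ⊆ ℝ^{a+1} × ℝ^{b+1}`. -/
def prodSimplices (a b : ℕ) : Set ((Fin (a + 1) ⊕ Fin (b + 1)) → ℝ) :=
  convexHull ℝ { x | ∃ (i : Fin (a + 1)) (j : Fin (b + 1)),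
    x = Sum.elim (stdBasisVec i) (stdBasisVec j) }

/-! ### Arcs and (I,J)-trees -/

/-- An arc on `w`: a pair `(i,j)` with `i ∈ I` and `j ∈ J`. -/
def IsArc (w : List Bool) (p : ℕ × ℕ) : Prop := p.1 ∈ Iset w ∧ p.2 ∈ Jset w

/-- The six configurations in which the arcs `(i,j) = p` and `(i',j') = q` cyclically
cross. -/
def CycCrossRaw (p q : ℕ × ℕ) : Prop :=
  (p.1 < q.1 ∧ q.1 < p.2 ∧ p.2 < q.2) ∨   -- i < i' < j < j'
  (q.2 < p.1 ∧ p.1 < q.1 ∧ q.1 < p.2) ∨   -- j' < i < i' < j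
  (p.2 < q.2 ∧ q.2 < p.1 ∧ p.1 < q.1) ∨   -- j < j' < i < i'
  (q.1 < p.2 ∧ p.2 < q.2 ∧ q.2 < p.1) ∨   -- i' < j < j' < i
  (p.1 < q.2 ∧ q.2 < q.1 ∧ q.1 < p.2) ∨   -- i < j' < i' < j
  (p.2 < p.1 ∧ p.1 < q.2 ∧ q.2 < q.1)     -- j < i < j' < i'

/-- Two arcs cyclically cross (up to swapping the roles of the two arcs). -/
def CycCross (p q : ℕ × ℕ) : Prop := CycCrossRaw p q ∨ CycCrossRaw q p

/-- A cyclic (I,J)-forest: a set of pairwise cyclically non-crossing arcs. -/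
def CycForest (w : List Bool) (F : Set (ℕ × ℕ)) : Prop :=
  (∀ p ∈ F, IsArc w p) ∧ ∀ p ∈ F, ∀ q ∈ F, p ≠ q → ¬ CycCross p q

/-- A cyclic (I,J)-tree: a maximal cyclic (I,J)-forest. -/
def CycTree (w : List Bool) (T : Set (ℕ × ℕ)) : Prop :=
  CycForest w T ∧ ∀ T', CycForest w T' → T ⊆ T' → T' = T

/-- An increasing (I,J)-forest: a cyclic (I,J)-forest all of whose arcs are increasing
or minimal. -/
def IncForest (w : List Bool) (F : Set (ℕ × ℕ)) : Prop :=
  CycForest w F ∧ ∀ p ∈ F, p.1 ≤ p.2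

/-- An increasing (I,J)-tree: a maximal increasing (I,J)-forest. -/
def IncTree (w : List Bool) (T : Set (ℕ × ℕ)) : Prop :=
  IncForest w T ∧ ∀ T', IncForest w T' → T ⊆ T' → T' = T

/-- Two edges `(a,b)` and `(c,d)` with `a < b`, `c < d` cross if `a < c < b < d` or
`c < a < d < b`. -/
def CrossE (p q : ℕ × ℕ) : Prop :=
  (p.1 < q.1 ∧ q.1 < p.2 ∧ p.2 < q.2) ∨ (q.1 < p.1 ∧ p.1 < q.2 ∧ q.2 < p.2)

/-- A graph on `I ∪ J` whose edges `(i,j)` satisfy `i ∈ I`, `j ∈ J`, `i < j`, which is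
alternating (every vertex is a source or a sink) and non-crossing. -/
def AltNC (w : List Bool) (H : Set (ℕ × ℕ)) : Prop :=
  (∀ p ∈ H, p.1 ∈ Iset w ∧ p.2 ∈ Jset w ∧ p.1 < p.2) ∧
  (∀ v : ℕ, (∀ p ∈ H, p.2 ≠ v) ∨ (∀ p ∈ H, p.1 ≠ v)) ∧
  (∀ p ∈ H, ∀ q ∈ H, p ≠ q → ¬ CrossE p q)

/-- The set `D_ν̄`: maximal alternating non-crossing graphs. -/
def Dnu (w : List Bool) (H : Set (ℕ × ℕ)) : Prop :=
  AltNC w H ∧ ∀ H', AltNC w H' → H ⊆ H' → H' = H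

/-- A maximal arc: `(1,n)`, or an arc `(i,j)` with `j < i` and no index strictly
between `j` and `i`. -/
def MaxArc (w : List Bool) (p : ℕ × ℕ) : Prop :=
  (p.1 = 1 ∧ p.2 = nIdx w) ∨
  (p.2 < p.1 ∧ ∀ k ∈ Iset w ∪ Jset w, ¬ (p.2 < k ∧ k < p.1))

/-! ### Cyclic peaks and rotations -/

/-- The positions `r` of the (non-wrap-around) cyclic peaks: `N` at `r` and `E` at `r+1`. -/
def peakPositions (w : List Bool) : List ℕ :=
  (List.range w.length).filter fun r => !letterAt w r && letterAt w (r + 1)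

/-- The position of the `E` step of the `l`-th cyclic peak (`1 ≤ l ≤ w`); the `w`-th
cyclic peak is the wrap-around peak, whose `E` step is at position `0`. -/
def shiftPos (w : List Bool) (l : ℕ) : ℕ :=
  if l = numVal w then 0 else (peakPositions w).getD (l - 1) 0 + 1

/-- The word `ν̄(l)` obtained by cyclically shifting `w = ν̄` to start at the `E` step of
the `l`-th cyclic peak. -/
def rotWord (w : List Bool) (l : ℕ) : List Bool :=
  w.drop (shiftPos w l) ++ w.take (shiftPos w l)

/-- The effect of the rotation on positions. -/
def rotPos (w : List Bool) (l : ℕ) (p : ℕ) : ℕ :=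
  (p + w.length - shiftPos w l) % w.length

/-- The position of the `E` step with index `i`. -/
def Epos (w : List Bool) (i : ℕ) : ℕ :=
  (((List.range w.length).filter fun p => letterAt w p && decide (idxAt w p = i))).headD 0

/-- The position of the `N` step with index `j`. -/
def Npos (w : List Bool) (j : ℕ) : ℕ :=
  (((List.range w.length).filter fun p => !letterAt w p && decide (idxAt w p = j))).headD 0

/-- The map induced on arcs by the cyclic rotation taking `ν̄` to `ν̄(l)`. -/
def arcMap (w : List Bool) (l : ℕ) (p : ℕ × ℕ) : ℕ × ℕ :=
  (idxAt (rotWord w l) (rotPos w l (Epos w p.1)),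
   idxAt (rotWord w l) (rotPos w l (Npos w p.2)))

/-- The arc determined by the `l`-th cyclic peak. -/
def peakArc (w : List Bool) (l : ℕ) : ℕ × ℕ :=
  if l = numVal w then (1, nIdx w)
  else (idxAt w ((peakPositions w).getD (l - 1) 0 + 1), idxAt w ((peakPositions w).getD (l - 1) 0))

end FP

/-!
Comparing netflows at the source gives `μ₁ + μ₂ = 1`, so apart from the trivial cases
`μ₁ ∈ {0, 1}` one of the three route vectors is a strict convex combination of the other two.
All coordinates lie in `{-1, 0, 1}`, which forces the two outer vectors to be equal or opposite
in every coordinate. Their difference is then a circulation whose flow runs along allowed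
directions only; following positive flow never stops, so in a finite acyclic graph such a
circulation vanishes. Three distinct collinear points would give such an affine combination.
-/

theorem List.sum_map_sub_of_isChain {α β γ : Type*} [AddCommGroup β] (φ : γ → β)
    (a b : α → γ) :
    ∀ (L : List α) (hL : L ≠ []), L.IsChain (fun s t => b s = a t) →
      (L.map fun s => φ (a s) - φ (b s)).sum = φ (a (L.head hL)) - φ (b (L.getLast hL))
  | [_], _, _ => by simp
  | s :: t :: L, _, h => by
    rw [List.isChain_cons_cons] at h
    rw [List.map_cons, List.sum_cons,
      List.sum_map_sub_of_isChain φ a b (t :: L) (List.cons_ne_nil _ _) h.2,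
      List.getLast_cons_cons, List.head_cons, List.head_cons, h.1, sub_add_sub_cancel]

namespace FP.LGraph

variable {G : LGraph}

def incidence (G : LGraph) (v : ℕ) (e : Fin G.m) : ℝ :=
  (if G.tail e = v then 1 else 0) - (if G.head e = v then 1 else 0)

theorem netflow_eq_dotProduct (x : Fin G.m → ℝ) (v : ℕ) :
    G.netflow x v = x ⬝ᵥ G.incidence v := by
  refine Finset.sum_congr rfl fun e _ => ?_
  simp only [incidence]
  split_ifs <;> ring

theorem netflow_add (x y : Fin G.m → ℝ) (v : ℕ) :
    G.netflow (x + y) v = G.netflow x v + G.netflow y v := by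
  simp only [netflow_eq_dotProduct, add_dotProduct]

theorem netflow_sub (x y : Fin G.m → ℝ) (v : ℕ) :
    G.netflow (x - y) v = G.netflow x v - G.netflow y v := by
  simp only [netflow_eq_dotProduct, sub_dotProduct]

theorem netflow_smul (a : ℝ) (x : Fin G.m → ℝ) (v : ℕ) :
    G.netflow (a • x) v = a * G.netflow x v := by
  simp only [netflow_eq_dotProduct, smul_dotProduct, smul_eq_mul]

def FlowStep (G : LGraph) (y : Fin G.m → ℝ) (a b : ℕ) : Prop :=
  ∃ e : Fin G.m, (G.tail e = a ∧ G.head e = b ∧ 0 < y e) ∨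
    (G.head e = a ∧ G.tail e = b ∧ y e < 0)

variable {y : Fin G.m → ℝ} {a b : ℕ}

theorem FlowStep.dStep (hpos : ∀ e, 0 < y e → G.etype e ≠ .backward)
    (hneg : ∀ e, y e < 0 → G.etype e ≠ .forward) (h : G.FlowStep y a b) : G.DStep a b := by
  obtain ⟨e, ⟨ht, hh, hy⟩ | ⟨hh, ht, hy⟩⟩ := h
  exacts [⟨e, .inl ⟨ht, hh, hpos e hy⟩⟩, ⟨e, .inr ⟨hh, ht, hneg e hy⟩⟩]

theorem FlowStep.exists_flowStep (hnet : ∀ v, G.netflow y v = 0) (h : G.FlowStep y a b) :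
    ∃ c, G.FlowStep y b c := by
  by_contra! hout
  have outflow_nonpos : ∀ e, (if G.tail e = b then y e else 0) ≤ 0 := fun e => by
    split_ifs with he
    exacts [not_lt.1 fun hy => hout _ ⟨e, .inl ⟨he, rfl, hy⟩⟩, le_rfl]
  have inflow_nonneg : ∀ e, 0 ≤ (if G.head e = b then y e else 0) := fun e => by
    split_ifs with he
    exacts [not_lt.1 fun hy => hout _ ⟨e, .inr ⟨he, rfl, hy⟩⟩, le_rfl]
  have : G.netflow y b < 0 := by
    refine Finset.sum_neg'
      (fun e _ => sub_nonpos_of_le ((outflow_nonpos e).trans (inflow_nonneg e))) ?_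
    obtain ⟨e, ⟨-, hh, hy⟩ | ⟨-, ht, hy⟩⟩ := h
    · refine ⟨e, Finset.mem_univ _, sub_neg_of_lt ((outflow_nonpos e).trans_lt ?_)⟩
      rwa [if_pos hh]
    · refine ⟨e, Finset.mem_univ _, sub_neg_of_lt (lt_of_lt_of_le ?_ (inflow_nonneg e))⟩
      rwa [if_pos ht]
  exact this.ne (hnet b)

theorem eq_zero_of_netflow_eq_zero (hacyc : G.Acyclic) (hnet : ∀ v, G.netflow y v = 0)
    (hpos : ∀ e, 0 < y e → G.etype e ≠ .backward)
    (hneg : ∀ e, y e < 0 → G.etype e ≠ .forward) : y = 0 := by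
  let S : Set ℕ := {a | ∃ b, G.FlowStep y a b}
  have hS : S.Finite := by
    refine ((Set.finite_range G.tail).union (Set.finite_range G.head)).subset ?_
    rintro a ⟨b, e, ⟨rfl, -⟩ | ⟨rfl, -⟩⟩
    exacts [.inl ⟨e, rfl⟩, .inr ⟨e, rfl⟩]
  have : IsStrictOrder ℕ (flip (Relation.TransGen G.DStep)) :=
    { irrefl := hacyc, trans := fun _ _ _ h₁ h₂ => h₂.trans h₁ }
  -- `S` would contain a sink of the finite acyclic relation, but flow never stops.
  have hS_empty : ∀ a ∈ S, False := fun a ha =>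
    (hS.wellFoundedOn (r := flip (Relation.TransGen G.DStep))).induction ha fun b ⟨c, hbc⟩ ih =>
      ih c (hbc.exists_flowStep hnet) (Relation.TransGen.single (hbc.dStep hpos hneg))
  funext e
  by_contra he
  rcases lt_or_gt_of_ne he with h | h
  exacts [hS_empty _ ⟨G.tail e, e, .inr ⟨rfl, rfl, h⟩⟩,
    hS_empty _ ⟨G.head e, e, .inl ⟨rfl, rfl, h⟩⟩]

def signedVec (G : LGraph) (L : List (Fin G.m × Bool)) (e : Fin G.m) : ℝ :=
  if (e, true) ∈ L then 1 else if (e, false) ∈ L then -1 else 0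

theorem signedVec_cons {s : Fin G.m × Bool} {L : List (Fin G.m × Bool)}
    (hs : s.1 ∉ L.map Prod.fst) :
    G.signedVec (s :: L) = G.signedVec L + Pi.single s.1 (if s.2 then 1 else -1) := by
  funext e
  obtain ⟨f, d⟩ := s
  have hf : ∀ c, (f, c) ∉ L := fun c h => hs (List.mem_map.2 ⟨_, h, rfl⟩)
  by_cases he : e = f
  · subst he
    cases d <;> simp [signedVec, hf]
  · simp [signedVec, he]

theorem signedVec_dotProduct {L : List (Fin G.m × Bool)} (hL : (L.map Prod.fst).Nodup)
    (c : Fin G.m → ℝ) :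
    G.signedVec L ⬝ᵥ c = (L.map fun s => (if s.2 then 1 else -1) * c s.1).sum := by
  induction L with
  | nil => simp [signedVec, dotProduct]
  | cons s L ih =>
    rw [List.map_cons, List.nodup_cons] at hL
    rw [signedVec_cons hL.1, add_dotProduct, ih hL.2, single_dotProduct, List.map_cons,
      List.sum_cons, add_comm]

theorem sign_mul_incidence (s : Fin G.m × Bool) (v : ℕ) :
    (if s.2 then 1 else -1) * G.incidence v s.1 =
      (if G.sv s = v then 1 else 0) - (if G.ev s = v then 1 else 0) := by
  obtain ⟨e, _ | _⟩ := s <;> simp [incidence, sv, ev]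

theorem eq_or_eq_neg_of_add_mul_eq {a b c s t : ℝ} (ha : a ∈ ({-1, 0, 1} : Set ℝ))
    (hb : b ∈ ({-1, 0, 1} : Set ℝ)) (hc : c ∈ ({-1, 0, 1} : Set ℝ)) (hs : 0 < s)
    (ht : 0 < t) (h : (s + t) * c = s * a + t * b) : a = b ∨ a = -b := by
  simp only [Set.mem_insert_iff, Set.mem_singleton_iff] at ha hb hc
  rcases ha with rfl | rfl | rfl <;> rcases hb with rfl | rfl | rfl <;>
    rcases hc with rfl | rfl | rfl <;> first | (norm_num; done) | (exfalso; linarith)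

namespace Route

theorem vec_eq_signedVec (R : Route G) : R.vec = G.signedVec R.steps := rfl

theorem netflow_vec (R : Route G) (v : ℕ) :
    G.netflow R.vec v = (if v = G.src then 1 else 0) - (if v = G.snk then 1 else 0) := by
  rw [netflow_eq_dotProduct, vec_eq_signedVec, signedVec_dotProduct R.nodup]
  simp only [sign_mul_incidence]
  rw [List.sum_map_sub_of_isChain (fun u => if u = v then (1 : ℝ) else 0) G.sv G.ev R.steps R.ne
    R.chain, R.first, R.last]
  simp only [eq_comm]

theorem vec_mem (R : Route G) (e : Fin G.m) : R.vec e ∈ ({-1, 0, 1} : Set ℝ) := by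
  unfold vec
  split_ifs <;> simp

theorem etype_ne_backward (R : Route G) {e : Fin G.m} (he : 0 < R.vec e) :
    G.etype e ≠ .backward := by
  unfold vec at he
  split_ifs at he with h
  · exact (R.dir _ h).1 rfl
  all_goals norm_num at he

theorem etype_ne_forward (R : Route G) {e : Fin G.m} (he : R.vec e < 0) :
    G.etype e ≠ .forward := by
  unfold vec at he
  split_ifs at he with h₁ h₂
  · norm_num at he
  · exact (R.dir _ h₂).2 rfl
  · norm_num at he

theorem vec_ne_zero (R : Route G) {s : Fin G.m × Bool} (hs : s ∈ R.steps) : R.vec s.1 ≠ 0 := by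
  obtain ⟨e, _ | _⟩ := s <;> unfold vec <;> split_ifs <;> simp_all

variable (hacyc : G.Acyclic)
include hacyc

/-- A route from a vertex back to itself would be a directed cycle. -/
theorem src_ne_snk (R : Route G) : G.src ≠ G.snk := by
  intro h
  have hzero := eq_zero_of_netflow_eq_zero hacyc (by simp [R.netflow_vec, h])
    (fun _ => R.etype_ne_backward) (fun _ => R.etype_ne_forward)
  exact R.vec_ne_zero (List.head_mem R.ne) (congrFun hzero _)

/-- The difference of the two routes is a circulation that uses every edge in an allowed
direction. -/
theorem vec_eq_of_forall_eq_or_eq_neg (A B : Route G)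
    (h : ∀ e, A.vec e = B.vec e ∨ A.vec e = -B.vec e) : A.vec = B.vec := by
  have hdiff : ∀ e, A.vec e - B.vec e = 0 ∨ A.vec e - B.vec e = 2 * A.vec e :=
    fun e => (h e).imp (fun h => by rw [h, sub_self]) (fun h => by rw [h]; ring)
  refine sub_eq_zero.1
    (eq_zero_of_netflow_eq_zero hacyc (fun v => ?_) (fun e he => ?_) fun e he => ?_)
  · rw [netflow_sub, A.netflow_vec, B.netflow_vec, sub_self]
  · refine A.etype_ne_backward ?_
    rcases hdiff e with h | h <;> simp only [Pi.sub_apply, h] at he <;> linarith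
  · refine A.etype_ne_forward ?_
    rcases hdiff e with h | h <;> simp only [Pi.sub_apply, h] at he <;> linarith

theorem vec_eq_of_smul_add_smul (A B C : Route G) {s t : ℝ} (hs : 0 < s) (ht : 0 < t)
    (h : (s + t) • C.vec = s • A.vec + t • B.vec) : A.vec = B.vec :=
  vec_eq_of_forall_eq_or_eq_neg hacyc A B fun e =>
    eq_or_eq_neg_of_add_mul_eq (A.vec_mem e) (B.vec_mem e) (C.vec_mem e) hs ht
      (by simpa using congrFun h e)

theorem vec_eq_or_vec_eq_of_eq_smul_add_smul (Ru Rv Rw : Route G) {μ₁ μ₂ : ℝ}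
    (h : Ru.vec = μ₁ • Rv.vec + μ₂ • Rw.vec) : Ru.vec = Rv.vec ∨ Ru.vec = Rw.vec := by
  have hsum : μ₁ + μ₂ = 1 := by
    have := congrArg (G.netflow · G.src) h
    simp only [netflow_add, netflow_smul, netflow_vec, if_pos, if_neg (Ru.src_ne_snk hacyc)]
      at this
    linarith
  obtain rfl : μ₂ = 1 - μ₁ := by linarith
  rcases lt_trichotomy μ₁ 0 with h₀ | rfl | h₀
  · exact .inl <|
      vec_eq_of_smul_add_smul hacyc Ru Rv Rw one_pos (neg_pos.2 h₀) (by rw [h]; module)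
  · exact .inr (by simpa using h)
  rcases lt_trichotomy μ₁ 1 with h₁ | rfl | h₁
  · have hvw := vec_eq_of_smul_add_smul hacyc Rv Rw Ru h₀ (sub_pos.2 h₁) (by rw [h]; module)
    exact .inl (by rw [h, hvw]; module)
  · exact .inl (by simpa using h)
  · exact .inr <|
      vec_eq_of_smul_add_smul hacyc Ru Rw Rv one_pos (sub_pos.2 h₁) (by rw [h]; module)

end Route

end FP.LGraph

open FP in
theorem stmt2_general (G : LGraph) (hacyc : G.Acyclic) :
    (∀ (Ru Rv Rw : LGraph.Route G) (μ₁ μ₂ : ℝ),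
        Ru.vec = μ₁ • Rv.vec + μ₂ • Rw.vec → Ru.vec = Rv.vec ∨ Ru.vec = Rw.vec) ∧
    (∀ Ru Rv Rw : LGraph.Route G,
        Ru.vec ≠ Rv.vec → Ru.vec ≠ Rw.vec → Rv.vec ≠ Rw.vec →
        ¬ Collinear ℝ ({Ru.vec, Rv.vec, Rw.vec} : Set (Fin G.m → ℝ))) := by
  refine ⟨fun Ru Rv Rw _ _ =>
    LGraph.Route.vec_eq_or_vec_eq_of_eq_smul_add_smul hacyc Ru Rv Rw, ?_⟩
  intro Ru Rv Rw huv huw hvw hcol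
  obtain ⟨r, hr⟩ := mem_affineSpan_pair_iff_exists_lineMap_eq.1 <|
    hcol.mem_affineSpan_of_mem_of_ne (p₃ := Ru.vec) (by simp) (by simp) (by simp) hvw
  rw [AffineMap.lineMap_apply_module] at hr
  exact (LGraph.Route.vec_eq_or_vec_eq_of_eq_smul_add_smul hacyc Ru Rv Rw hr.symm).elim huv huw

open FP in
/-- If `G` is acyclic and `x_{R_u} = μ₁ x_{R_v} + μ₂ x_{R_w}` for routes
`R_u, R_v, R_w`, then `x_{R_u} = x_{R_v}` or `x_{R_u} = x_{R_w}`.  In particular no three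
pairwise distinct signed characteristic vectors of routes are collinear. -/
theorem stmt2 (n : ℕ) (hn : 2 ≤ n) (G : LGraph) (hsrc : G.src = 1) (hsnk : G.snk = n)
    (hwf : G.WF n) (hconn : G.Connected n) (hacyc : G.Acyclic)
    (hroutes : ∀ e : Fin G.m, ∃ (R : LGraph.Route G) (c : Bool), (e, c) ∈ R.steps)
    (hends : ∀ e : Fin G.m,
      (G.tail e = 1 ∨ G.head e = 1 ∨ G.tail e = n ∨ G.head e = n) → G.etype e = .forward) :
    (∀ (Ru Rv Rw : LGraph.Route G) (μ₁ μ₂ : ℝ),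
        Ru.vec = μ₁ • Rv.vec + μ₂ • Rw.vec → Ru.vec = Rv.vec ∨ Ru.vec = Rw.vec) ∧
    (∀ Ru Rv Rw : LGraph.Route G,
        Ru.vec ≠ Rv.vec → Ru.vec ≠ Rw.vec → Rv.vec ≠ Rw.vec →
        ¬ Collinear ℝ ({Ru.vec, Rv.vec, Rw.vec} : Set (Fin G.m → ℝ))) :=
  stmt2_general G hacyc
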